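/- Let (λ_k)_{k∈ℕ} be a nondecreasing sequence of nonnegative real numbers tending to infinity whose counting function N(λ) = Card{k ∈ ℕ : λ_k ≤ λ} satisfies N(λ) ∼ C λ^{n/2} as λ → ∞ for some C > 0 and n > 0, and let ψ : (0,∞) → (0,∞) be strictly increasing and regularly varying at infinity with index r > 0. Then for every t > 0 the series ∑_{k=0}^∞ e^{-ψ(λ_k) t} converges (where the summand is interpreted as 1 if λ_k = 0 and ψ is extended by ψ(0) = 0). -/

import Mathlib

/-!
Regular variation of `ψ` with index `r > 0` gives `ψ(2x) ≥ 2^(r/2) ψ(x)` for large `x`; iterating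
this doubling inequality and using monotonicity between dyadic points yields a power lower bound
`ψ(x) ≥ c x^(r/2)`. The Weyl law gives `k + 1 ≤ N(λ_k) ≤ 2C λ_k^(n/2)`, i.e. `λ_k ≥ D k^(2/n)`.
Hence `ψ(λ_k) t ≥ E k^(r/n)` for large `k`, and `e^(-E k^(r/n))` is eventually below `k^(-2)`.
-/

open Filter Set Topology

theorem summable_exp_neg_of_eventually_mul_rpow_le {g : ℕ → ℝ} {E p : ℝ} (hE : 0 < E)
    (hp : 0 < p) (h : ∀ᶠ k : ℕ in atTop, E * (k : ℝ) ^ p ≤ g k) :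
    Summable fun k => Real.exp (-g k) := by
  have hpow : Tendsto (fun k : ℕ => (k : ℝ) ^ p) atTop atTop :=
    (tendsto_rpow_atTop hp).comp tendsto_natCast_atTop_atTop
  have hO : (fun k : ℕ => Real.exp (-E * (k : ℝ) ^ p)) =O[atTop] fun k => (k : ℝ) ^ (-2 : ℝ) := by
    refine ((isLittleO_exp_neg_mul_rpow_atTop hE (-2 / p)).comp_tendsto hpow).isBigO.congr_right ?_
    intro k
    simp only [Function.comp_apply]
    rw [← Real.rpow_mul k.cast_nonneg, mul_div_cancel₀ _ hp.ne']
  refine (summable_of_isBigO_nat (Real.summable_nat_rpow.mpr (by norm_num)) hO)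
    |>.of_norm_bounded_eventually_nat ?_
  filter_upwards [h] with k hk
  rw [Real.norm_eq_abs, abs_of_pos (Real.exp_pos _), Real.exp_le_exp]
  linarith

theorem mul_rpow_le_of_two_rpow_mul_le {f : ℝ → ℝ} {x₀ s : ℝ} (hx₀ : 0 < x₀) (hs : 0 ≤ s)
    (hf₀ : 0 ≤ f x₀) (hmono : MonotoneOn f (Ici x₀))
    (hdouble : ∀ x ≥ x₀, 2 ^ s * f x ≤ f (2 * x)) :
    ∀ x ≥ x₀, f x₀ / (2 * x₀) ^ s * x ^ s ≤ f x := by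
  set c := f x₀ / (2 * x₀) ^ s
  have hc : 0 ≤ c := by positivity
  have base : ∀ x ∈ Icc x₀ (2 * x₀), c * x ^ s ≤ f x := fun x ⟨hx₀x, hx⟩ =>
    calc c * x ^ s ≤ c * (2 * x₀) ^ s := by gcongr; linarith
      _ = f x₀ := div_mul_cancel₀ _ (by positivity)
      _ ≤ f x := hmono (mem_Ici.mpr le_rfl) hx₀x hx₀x
  have step : ∀ m : ℕ, ∀ x ∈ Icc x₀ (2 ^ m * x₀), c * x ^ s ≤ f x := by
    intro m
    induction m with
    | zero => exact fun x hx => base x ⟨hx.1, by linarith [hx.2, one_mul x₀]⟩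
    | succ m ih =>
      rintro x ⟨hx₀x, hx⟩
      rcases le_or_gt x (2 * x₀) with hx2 | hx2
      · exact base x ⟨hx₀x, hx2⟩
      have hhalf := ih (x / 2) ⟨by linarith, by rw [pow_succ] at hx; linarith⟩
      calc c * x ^ s = 2 ^ s * (c * (x / 2) ^ s) := by
            rw [Real.div_rpow (by linarith) zero_le_two]; field_simp
        _ ≤ 2 ^ s * f (x / 2) := by gcongr
        _ ≤ f (2 * (x / 2)) := hdouble _ (by linarith)
        _ = f x := by rw [mul_div_cancel₀ x two_ne_zero]
  intro x hx
  obtain ⟨m, hm⟩ := pow_unbounded_of_one_lt (x / x₀) one_lt_two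
  exact step m x ⟨hx, (div_le_iff₀ hx₀).mp hm.le⟩

theorem exists_pos_eventually_mul_rpow_le_of_tendsto_ratio {f : ℝ → ℝ} {r s : ℝ} (hs : 0 ≤ s)
    (hsr : s < r) (hmono : MonotoneOn f (Ioi 0)) (hpos : ∀ x > 0, 0 < f x)
    (hratio : Tendsto (fun x => f (2 * x) / f x) atTop (𝓝 (2 ^ r))) :
    ∃ c > 0, ∀ᶠ x in atTop, c * x ^ s ≤ f x := by
  have hlt : (2 : ℝ) ^ s < 2 ^ r := Real.rpow_lt_rpow_of_exponent_lt one_lt_two hsr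
  obtain ⟨x₀, hx₀⟩ := ((hratio.eventually (eventually_gt_nhds hlt)).and
    (eventually_gt_atTop 0)).exists_forall_of_atTop
  have hx₀pos : 0 < x₀ := (hx₀ x₀ le_rfl).2
  have hdouble : ∀ x ≥ x₀, 2 ^ s * f x ≤ f (2 * x) := fun x hx =>
    ((lt_div_iff₀ (hpos x (hx₀ x hx).2)).mp (hx₀ x hx).1).le
  refine ⟨f x₀ / (2 * x₀) ^ s, div_pos (hpos x₀ hx₀pos) (by positivity),
    eventually_atTop.mpr ⟨x₀, ?_⟩⟩
  exact mul_rpow_le_of_two_rpow_mul_le hx₀pos hs (hpos x₀ hx₀pos).le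
    (hmono.mono fun x hx => hx₀pos.trans_le hx) hdouble

theorem finite_setOf_le_of_tendsto_atTop {Λ : ℕ → ℝ} (hΛ : Tendsto Λ atTop atTop) (x : ℝ) :
    {k | Λ k ≤ x}.Finite := by
  rw [← Nat.cofinite_eq_atTop] at hΛ
  simpa only [not_lt] using eventually_cofinite.mp (hΛ.eventually_gt_atTop x)

theorem add_one_le_natCard_setOf_le {Λ : ℕ → ℝ} (hmono : Monotone Λ)
    (hfin : {j | Λ j ≤ Λ k}.Finite) : k + 1 ≤ Nat.card {j | Λ j ≤ Λ k} := by
  calc k + 1 = Nat.card (Iic k) := by simp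
    _ ≤ Nat.card {j | Λ j ≤ Λ k} := Nat.card_mono hfin fun j hj => hmono hj

theorem exists_pos_eventually_mul_rpow_le_of_tendsto_card_div {Λ : ℕ → ℝ} (hmono : Monotone Λ)
    (htop : Tendsto Λ atTop atTop) {C n : ℝ} (hC : 0 < C) (hn : 0 < n)
    (hWeyl : Tendsto (fun x : ℝ => (Nat.card {k : ℕ | Λ k ≤ x} : ℝ) / (C * x ^ (n / 2)))
      atTop (𝓝 1)) :
    ∃ D > 0, ∀ᶠ k : ℕ in atTop, D * (k : ℝ) ^ (2 / n) ≤ Λ k := by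
  refine ⟨(2 * C)⁻¹ ^ (2 / n), by positivity, ?_⟩
  filter_upwards [htop.eventually ((hWeyl.eventually (eventually_lt_nhds one_lt_two)).and
    (eventually_gt_atTop 0))] with k ⟨hk, hΛk⟩
  have hcount : (k : ℝ) ≤ 2 * C * Λ k ^ (n / 2) := by
    have hcard : (k : ℝ) + 1 ≤ Nat.card {j | Λ j ≤ Λ k} := by
      exact_mod_cast add_one_le_natCard_setOf_le hmono
        (finite_setOf_le_of_tendsto_atTop htop (Λ k))
    rw [div_lt_iff₀ (by positivity)] at hk
    linarith
  calc (2 * C)⁻¹ ^ (2 / n) * (k : ℝ) ^ (2 / n) = ((2 * C)⁻¹ * k) ^ (2 / n) :=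
        (Real.mul_rpow (by positivity) k.cast_nonneg).symm
    _ ≤ (Λ k ^ (n / 2)) ^ (2 / n) := by
        gcongr
        rw [inv_mul_le_iff₀ (by positivity)]
        exact hcount
    _ = Λ k := by
        rw [← Real.rpow_mul hΛk.le, div_mul_div_cancel₀ two_ne_zero, div_self hn.ne', Real.rpow_one]

theorem subordinate_trace_summable_general
    (Λ : ℕ → ℝ) (hΛmono : Monotone Λ)
    (hΛtop : Tendsto Λ atTop atTop)
    (C n : ℝ) (hC : 0 < C) (hn : 0 < n)
    (hWeyl : Tendsto
      (fun x : ℝ => (Nat.card {k : ℕ | Λ k ≤ x} : ℝ) / (C * x ^ (n / 2)))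
      atTop (nhds 1))
    (ψ : ℝ → ℝ) (r : ℝ) (hr : 0 < r)
    (hψmono : StrictMonoOn ψ (Ioi 0))
    (hψpos : ∀ x > (0 : ℝ), 0 < ψ x)
    (hψRV : ∀ a > (0 : ℝ), Tendsto (fun x => ψ (a * x) / ψ x) atTop (nhds (a ^ r))) :
    ∀ t > (0 : ℝ), Summable fun k : ℕ => Real.exp (-(ψ (Λ k) * t)) := by
  intro t ht
  obtain ⟨c, hc, hψ⟩ := exists_pos_eventually_mul_rpow_le_of_tendsto_ratio (s := r / 2)
    (by positivity) (half_lt_self hr) hψmono.monotoneOn hψpos (hψRV 2 two_pos)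
  obtain ⟨D, hD, hΛ⟩ :=
    exists_pos_eventually_mul_rpow_le_of_tendsto_card_div hΛmono hΛtop hC hn hWeyl
  refine summable_exp_neg_of_eventually_mul_rpow_le (E := c * D ^ (r / 2) * t)
    (p := r / n) (by positivity) (by positivity) ?_
  filter_upwards [hΛ, hΛtop.eventually hψ] with k hΛk hψk
  calc c * D ^ (r / 2) * t * (k : ℝ) ^ (r / n) = c * (D * (k : ℝ) ^ (2 / n)) ^ (r / 2) * t := by
        rw [Real.mul_rpow hD.le (by positivity), ← Real.rpow_mul k.cast_nonneg,
          show 2 / n * (r / 2) = r / n by ring]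
        ring
    _ ≤ c * Λ k ^ (r / 2) * t := by gcongr
    _ ≤ ψ (Λ k) * t := by gcongr

/-- If the counting function satisfies `N(λ) ∼ C λ^(n/2)` as `λ → ∞` and `ψ` is
strictly increasing on `(0,∞)`, positive on `(0,∞)`, regularly varying at infinity with
index `r > 0`, and extended by `ψ(0) = 0` (so the summand is `1` when `λ_k = 0`), then for
every `t > 0` the series `∑_k e^{-ψ(λ_k) t}` converges. -/
theorem subordinate_trace_summable
    (Λ : ℕ → ℝ) (hΛmono : Monotone Λ) (hΛnonneg : ∀ k, 0 ≤ Λ k)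
    (hΛtop : Tendsto Λ atTop atTop)
    (C n : ℝ) (hC : 0 < C) (hn : 0 < n)
    (hWeyl : Tendsto
      (fun x : ℝ => (Nat.card {k : ℕ | Λ k ≤ x} : ℝ) / (C * x ^ (n / 2)))
      atTop (nhds 1))
    (ψ : ℝ → ℝ) (r : ℝ) (hr : 0 < r)
    (hψ0 : ψ 0 = 0)
    (hψmono : StrictMonoOn ψ (Ioi 0))
    (hψpos : ∀ x > (0 : ℝ), 0 < ψ x)
    (hψRV : ∀ a > (0 : ℝ), Tendsto (fun x => ψ (a * x) / ψ x) atTop (nhds (a ^ r))) :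
    ∀ t > (0 : ℝ), Summable fun k : ℕ => Real.exp (-(ψ (Λ k) * t)) :=
  subordinate_trace_summable_general Λ hΛmono hΛtop C n hC hn hWeyl ψ r hr hψmono hψpos hψRV
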